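/- arXiv:2411.02726 — 4 statements merged into one kernel-verified Lean document; each statement's English description precedes it below -/
import Mathlib

section
/- With L as the Elliptical Wishart negative log-likelihood on symmetric positive definite matrices, G is a critical point of L (i.e., the Euclidean gradient of L at G vanishes) if and only if G = (1/(nK))·Σ_{k=1}^K u(tr(G⁻¹S_k))·S_k. -/
open Matrix

theorem Matrix.inv_mul_mul_inv_eq_zero_iff {n α : Type*} [Fintype n] [DecidableEq n] [CommRing α]
    {A M : Matrix n n α} (hA : IsUnit A) : A⁻¹ * M * A⁻¹ = 0 ↔ M = 0 := by
  have hA' : IsUnit A⁻¹ := isUnit_nonsing_inv_iff.mpr hA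
  rw [hA'.mul_left_eq_zero, hA'.mul_right_eq_zero]

theorem Matrix.half_inv_mul_smul_sub_mul_inv_eq_zero_iff {n 𝕜 : Type*} [Fintype n]
    [DecidableEq n] [Field 𝕜] [CharZero 𝕜] {A T : Matrix n n 𝕜} (hA : IsUnit A) {c : 𝕜}
    (hc : c ≠ 0) : (1 / 2 : 𝕜) • (A⁻¹ * (c • A - T) * A⁻¹) = 0 ↔ A = (1 / c) • T := by
  rw [smul_eq_zero, or_iff_right (by norm_num), inv_mul_mul_inv_eq_zero_iff hA, sub_eq_zero,
    one_div, eq_inv_smul_iff₀ hc]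

theorem critical_point_iff_fixed_point_general
    (p n K : ℕ) (hn : 0 < n) (hK : 0 < K)
    (S : Fin K → Matrix (Fin p) (Fin p) ℝ)
    (u : ℝ → ℝ)
    (G : Matrix (Fin p) (Fin p) ℝ) (hG : G.PosDef) :
    (1 / 2 : ℝ) •
        (G⁻¹ * ((n * K : ℝ) • G - ∑ k, u ((G⁻¹ * S k).trace) • S k) * G⁻¹) = 0 ↔
      G = (1 / (n * K) : ℝ) • ∑ k, u ((G⁻¹ * S k).trace) • S k :=
  half_inv_mul_smul_sub_mul_inv_eq_zero_iff hG.isUnit (by positivity)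

/-- Critical point characterization: the Euclidean gradient
grad L(G) = (1/2) G⁻¹ (nK G - Σₖ u(tr(G⁻¹Sₖ)) Sₖ) G⁻¹ vanishes at an SPD matrix G
iff G satisfies the fixed-point equation G = (1/(nK)) Σₖ u(tr(G⁻¹Sₖ)) Sₖ. -/
theorem critical_point_iff_fixed_point
    (p n K : ℕ) (hn : 0 < n) (hK : 0 < K)
    (S : Fin K → Matrix (Fin p) (Fin p) ℝ) (hS : ∀ k, (S k).PosDef)
    (u : ℝ → ℝ)
    (G : Matrix (Fin p) (Fin p) ℝ) (hG : G.PosDef) :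
    (1 / 2 : ℝ) •
        (G⁻¹ * ((n * K : ℝ) • G - ∑ k, u ((G⁻¹ * S k).trace) • S k) * G⁻¹) = 0 ↔
      G = (1 / (n * K) : ℝ) • ∑ k, u ((G⁻¹ * S k).trace) • S k :=
  critical_point_iff_fixed_point_general p n K hn hK S u G hG
end

section
/- Let ν > 0, n, p positive integers, K a positive integer, and s₁,…,s_K > 0. The function L : ℝ → ℝ defined by L(x) = (nKp/2)·x + ((ν+np)/2)·Σ_{k=1}^K log(1 + s_k·e^{-x}/ν) is strictly convex on ℝ. -/
/-!
Each summand `x ↦ log (1 + c e^{-x})` with `c > 0` has derivative `-c / (c + e^x)`, which is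
strictly increasing, so it is strictly convex. A positive multiple of a nonempty sum of strictly
convex functions is strictly convex, and adding the linear term keeps it so.
-/

open Real Finset

section

variable {𝕜 E β ι : Type*} [AddCommMonoid E] [AddCommMonoid β] [PartialOrder β] {s : Set E}

theorem StrictConvexOn.const_smul [CommSemiring 𝕜] [PartialOrder 𝕜] [SMul 𝕜 E] [Module 𝕜 β]
    [PosSMulStrictMono 𝕜 β] {f : E → β} {c : 𝕜} (hc : 0 < c) (hf : StrictConvexOn 𝕜 s f) :
    StrictConvexOn 𝕜 s fun x => c • f x :=
  ⟨hf.1, fun x hx y hy hxy a b ha hb hab => by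
    simpa only [smul_add, smul_comm c] using smul_lt_smul_of_pos_left (hf.2 hx hy hxy ha hb hab) hc⟩

theorem StrictConvexOn.sum [Semiring 𝕜] [PartialOrder 𝕜] [IsOrderedCancelAddMonoid β] [SMul 𝕜 E]
    [DistribMulAction 𝕜 β] {t : Finset ι} (ht : t.Nonempty) {f : ι → E → β}
    (hf : ∀ i ∈ t, StrictConvexOn 𝕜 s (f i)) :
    StrictConvexOn 𝕜 s fun x => ∑ i ∈ t, f i x := by
  induction ht using Finset.Nonempty.cons_induction with
  | singleton i => simpa using hf i (mem_singleton_self i)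
  | cons i t hi ht ih =>
    simp only [sum_cons]
    exact (hf i (mem_cons_self i t)).add (ih fun j hj => hf j (mem_cons_of_mem hj))

end

theorem strictConvexOn_log_one_add_mul_exp_neg {c : ℝ} (hc : 0 < c) :
    StrictConvexOn ℝ Set.univ fun x => log (1 + c * exp (-x)) := by
  have hpos : ∀ x, 0 < 1 + c * exp (-x) := fun x => by positivity
  have hderiv : deriv (fun x => log (1 + c * exp (-x))) = fun x => -(c / (c + exp x)) := by
    funext x
    have h := (((hasDerivAt_neg x).exp.const_mul c).const_add 1).log (hpos x).ne'
    rw [h.deriv, exp_neg]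
    field_simp
    ring
  refine StrictMono.strictConvexOn_univ_of_deriv ?_ ?_
  · exact Continuous.log (by fun_prop) fun x => (hpos x).ne'
  · rw [hderiv]
    intro x y hxy
    exact neg_lt_neg (div_lt_div_of_pos_left hc (by positivity) (by gcongr))

theorem tWishart_scalar_strictly_convex_general
    (ν : ℝ) (hν : 0 < ν) (n p K : ℕ) (hK : 0 < K)
    (s : Fin K → ℝ) (hs : ∀ k, 0 < s k) :
    StrictConvexOn ℝ Set.univ
      (fun x : ℝ => (n * K * p / 2 : ℝ) * x +
        ((ν + n * p) / 2) * ∑ k, Real.log (1 + s k * Real.exp (-x) / ν)) := by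
  have hterm : ∀ k ∈ univ, StrictConvexOn ℝ Set.univ fun x => log (1 + s k * exp (-x) / ν) :=
    fun k _ => by
      simpa only [mul_div_right_comm] using
        strictConvexOn_log_one_add_mul_exp_neg (div_pos (hs k) hν)
  have hlinear : ConvexOn ℝ Set.univ fun x : ℝ => (n * K * p / 2 : ℝ) * x :=
    (LinearMap.mul ℝ ℝ (n * K * p / 2)).convexOn convex_univ
  have hnonempty : (univ : Finset (Fin K)).Nonempty := univ_nonempty_iff.mpr (Fin.pos_iff_nonempty.mp hK)
  exact hlinear.add_strictConvexOn ((StrictConvexOn.sum hnonempty hterm).const_smul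
    (by positivity : (0 : ℝ) < (ν + n * p) / 2))

/-- Strict convexity of the t-Wishart negative log-likelihood along the geodesic
of scalar matrices: x ↦ (nKp/2)x + ((ν+np)/2) Σₖ log(1 + sₖ e^(-x)/ν) is strictly
convex on ℝ. -/
theorem tWishart_scalar_strictly_convex
    (ν : ℝ) (hν : 0 < ν) (n p K : ℕ) (hn : 0 < n) (hp : 0 < p) (hK : 0 < K)
    (s : Fin K → ℝ) (hs : ∀ k, 0 < s k) :
    StrictConvexOn ℝ Set.univ
      (fun x : ℝ => (n * K * p / 2 : ℝ) * x +
        ((ν + n * p) / 2) * ∑ k, Real.log (1 + s k * Real.exp (-x) / ν)) :=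
  tWishart_scalar_strictly_convex_general ν hν n p K hK s hs
end

section
/- Let A, B be p×p symmetric positive definite matrices and S a symmetric positive definite matrix. Along the geodesic γ(t) = A^{1/2}(A^{-1/2}BA^{-1/2})^t A^{1/2} of the affine-invariant metric, the function t ↦ log tr(γ(t)⁻¹ S) is convex on [0,1]. -/
open Matrix

/-- The positive semidefinite square root (Mathlib's former `Matrix.PosSemidef.sqrt`). -/
noncomputable def Matrix.PosSemidef.sqrt {n 𝕜 : Type*} [Fintype n] [DecidableEq n] [RCLike 𝕜]
    [PartialOrder 𝕜]
    {A : Matrix n n 𝕜} (hA : A.PosSemidef) : Matrix n n 𝕜 :=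
  hA.1.eigenvectorUnitary.1 * diagonal ((↑) ∘ (√·) ∘ hA.1.eigenvalues) *
    (star hA.1.eigenvectorUnitary : Matrix n n 𝕜)

/-- Real power of a symmetric matrix via its spectral decomposition. -/
noncomputable def matRPow {p : ℕ} {M : Matrix (Fin p) (Fin p) ℝ}
    (hM : M.IsHermitian) (t : ℝ) : Matrix (Fin p) (Fin p) ℝ :=
  (hM.eigenvectorUnitary : Matrix (Fin p) (Fin p) ℝ) *
    Matrix.diagonal (fun i => hM.eigenvalues i ^ t) *
    star (hM.eigenvectorUnitary : Matrix (Fin p) (Fin p) ℝ)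

open Real

/-!
Write `R = A^{1/2}` and `R⁻¹ B R⁻¹ = U diag(λ) Uᵀ` with `λ > 0`. Then
`γ(t)⁻¹ = R⁻¹ U diag(λ^{-t}) Uᵀ R⁻¹`, so `tr(γ(t)⁻¹ S) = ∑ᵢ (λᵢ⁻¹)^t cᵢ`, where the `cᵢ > 0` are the
diagonal entries of the positive definite matrix `Uᵀ R⁻¹ S R⁻¹ U`. The logarithm of a positive
combination of exponentials `t ↦ (λᵢ⁻¹)^t` is convex by Hölder's inequality.
-/

theorem Real.sum_rpow_mul_rpow_le {ι : Type*} (s : Finset ι) {f g : ι → ℝ} (hf : ∀ i ∈ s, 0 ≤ f i)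
    (hg : ∀ i ∈ s, 0 ≤ g i) {u v : ℝ} (hu : 0 < u) (hv : 0 < v) (huv : u + v = 1) :
    ∑ i ∈ s, f i ^ u * g i ^ v ≤ (∑ i ∈ s, f i) ^ u * (∑ i ∈ s, g i) ^ v := by
  have := inner_le_Lp_mul_Lq_of_nonneg s (HolderConjugate.inv_inv hu hv huv)
    (fun i hi => rpow_nonneg (hf i hi) u) (fun i hi => rpow_nonneg (hg i hi) v)
  simp only [one_div, inv_inv] at this
  convert this using 3 <;> refine Finset.sum_congr rfl fun i hi => ?_
  · exact (rpow_rpow_inv (hf i hi) hu.ne').symm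
  · exact (rpow_rpow_inv (hg i hi) hv.ne').symm

theorem convexOn_log_sum_rpow_mul {ι : Type*} [Fintype ι] {b c : ι → ℝ} (hb : ∀ i, 0 < b i)
    (hc : ∀ i, 0 < c i) : ConvexOn ℝ Set.univ fun t : ℝ => log (∑ i, b i ^ t * c i) := by
  rcases isEmpty_or_nonempty ι with _ | _
  · simpa using convexOn_const (0 : ℝ) convex_univ
  have hsum : ∀ t : ℝ, 0 < ∑ i, b i ^ t * c i := fun t =>
    Finset.sum_pos (fun i _ => mul_pos (rpow_pos_of_pos (hb i) t) (hc i)) Finset.univ_nonempty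
  refine convexOn_iff_forall_pos.mpr ⟨convex_univ, fun x _ y _ u v hu hv huv => ?_⟩
  have hterm : ∀ i, b i ^ (u • x + v • y) * c i = (b i ^ x * c i) ^ u * (b i ^ y * c i) ^ v := by
    intro i
    have hb' := (hb i).le
    have hc' := (hc i).le
    rw [mul_rpow (rpow_nonneg hb' x) hc', mul_rpow (rpow_nonneg hb' y) hc', ← rpow_mul hb',
      ← rpow_mul hb', mul_mul_mul_comm, ← rpow_add (hb i), ← rpow_add (hc i), huv, rpow_one,
      smul_eq_mul, smul_eq_mul, mul_comm x, mul_comm y]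
  have holder : ∑ i, b i ^ (u • x + v • y) * c i ≤
      (∑ i, b i ^ x * c i) ^ u * (∑ i, b i ^ y * c i) ^ v := by
    simp only [hterm]
    exact sum_rpow_mul_rpow_le _ (fun i _ => (mul_pos (rpow_pos_of_pos (hb i) x) (hc i)).le)
      (fun i _ => (mul_pos (rpow_pos_of_pos (hb i) y) (hc i)).le) hu hv huv
  calc log (∑ i, b i ^ (u • x + v • y) * c i)
      ≤ log ((∑ i, b i ^ x * c i) ^ u * (∑ i, b i ^ y * c i) ^ v) := log_le_log (hsum _) holder
    _ = u • log (∑ i, b i ^ x * c i) + v • log (∑ i, b i ^ y * c i) := by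
      rw [log_mul (rpow_pos_of_pos (hsum x) u).ne' (rpow_pos_of_pos (hsum y) v).ne',
        log_rpow (hsum x), log_rpow (hsum y), smul_eq_mul, smul_eq_mul]

theorem Matrix.PosDef.posDef_sqrt {n : Type*} [Fintype n] [DecidableEq n] {A : Matrix n n ℝ}
    (hA : A.PosDef) : hA.posSemidef.sqrt.PosDef :=
  Unitary.isUnit_coe.posDef_star_right_conjugate_iff.mpr <|
    posDef_diagonal_iff.mpr fun i => by simpa using hA.eigenvalues_pos i

theorem Matrix.PosDef.mul_mul_of_isHermitian_of_isUnit {n R : Type*} [Fintype n] [DecidableEq n]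
    [Ring R] [PartialOrder R] [StarRing R] {U X : Matrix n n R} (hX : X.PosDef)
    (hU : U.IsHermitian) (hu : IsUnit U) : (U * X * U).PosDef := by
  simpa only [star_eq_conjTranspose, hU.eq] using hu.posDef_star_left_conjugate_iff.mpr hX

theorem Matrix.trace_inv_conj_mul {n α : Type*} [Fintype n] [DecidableEq n] [CommRing α]
    (R X S : Matrix n n α) : ((R * X * R)⁻¹ * S).trace = (X⁻¹ * (R⁻¹ * S * R⁻¹)).trace := by
  rw [mul_inv_rev, mul_inv_rev, Matrix.mul_assoc, trace_mul_comm]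
  simp only [Matrix.mul_assoc]

section matRPow

variable {p : ℕ} {M : Matrix (Fin p) (Fin p) ℝ} (hM : M.IsHermitian)

local notation "U" => (hM.eigenvectorUnitary : Matrix (Fin p) (Fin p) ℝ)

theorem matRPow_zero : matRPow hM 0 = 1 := by
  simp [matRPow]

theorem matRPow_add {s t : ℝ} (hpos : ∀ i, 0 < hM.eigenvalues i) :
    matRPow hM (s + t) = matRPow hM s * matRPow hM t := by
  simp only [matRPow, Matrix.mul_assoc, ← Matrix.mul_assoc (star U) U, Unitary.coe_star_mul_self,
    Matrix.one_mul, rpow_add (hpos _)]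
  rw [← Matrix.mul_assoc (diagonal _), diagonal_mul_diagonal]

theorem matRPow_inv (hpos : ∀ i, 0 < hM.eigenvalues i) (t : ℝ) :
    (matRPow hM t)⁻¹ = matRPow hM (-t) :=
  inv_eq_right_inv <| by rw [← matRPow_add hM hpos, add_neg_cancel, matRPow_zero]

theorem trace_matRPow_mul (t : ℝ) (X : Matrix (Fin p) (Fin p) ℝ) :
    (matRPow hM t * X).trace = ∑ i, hM.eigenvalues i ^ t * (star U * X * U) i i := by
  rw [matRPow, Matrix.mul_assoc, trace_mul_comm, ← Matrix.mul_assoc, trace_mul_comm]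
  simp [trace, diagonal_mul]

end matRPow

theorem log_trace_inv_geodesic_convex_general
    (p : ℕ)
    (A B S : Matrix (Fin p) (Fin p) ℝ)
    (hA : A.PosDef) (hB : B.PosDef) (hS : S.PosDef)
    (hM : ((hA.posSemidef.sqrt)⁻¹ * B * (hA.posSemidef.sqrt)⁻¹).IsHermitian) :
    ConvexOn ℝ (Set.Icc 0 1)
      (fun t : ℝ =>
        Real.log (((hA.posSemidef.sqrt * matRPow hM t * hA.posSemidef.sqrt)⁻¹ * S).trace)) := by
  have conj_posDef {X : Matrix (Fin p) (Fin p) ℝ} (hX : X.PosDef) :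
      ((hA.posSemidef.sqrt)⁻¹ * X * (hA.posSemidef.sqrt)⁻¹).PosDef :=
    have hR := hA.posDef_sqrt.inv
    hX.mul_mul_of_isHermitian_of_isUnit hR.1 hR.isUnit
  have hev : ∀ i, 0 < hM.eigenvalues i := (conj_posDef hB).eigenvalues_pos
  have hc : ∀ i, 0 < (star (hM.eigenvectorUnitary : Matrix (Fin p) (Fin p) ℝ) *
      ((hA.posSemidef.sqrt)⁻¹ * S * (hA.posSemidef.sqrt)⁻¹) * hM.eigenvectorUnitary) i i :=
    fun i => (Unitary.isUnit_coe.posDef_star_left_conjugate_iff.mpr (conj_posDef hS)).diag_pos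
  refine ((convexOn_log_sum_rpow_mul (fun i => inv_pos.mpr (hev i)) hc).subset
    (Set.subset_univ _) (convex_Icc 0 1)).congr fun t _ => ?_
  rw [trace_inv_conj_mul, matRPow_inv hM hev, trace_matRPow_mul]
  simp_rw [inv_rpow (hev _).le, rpow_neg (hev _).le]

/-- Along the affine-invariant geodesic γ(t) = A^(1/2) (A^(-1/2) B A^(-1/2))^t A^(1/2)
between SPD matrices A and B, the map t ↦ log tr(γ(t)⁻¹ S) is convex on [0,1]. -/
theorem log_trace_inv_geodesic_convex
    (p : ℕ) (hp : 0 < p)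
    (A B S : Matrix (Fin p) (Fin p) ℝ)
    (hA : A.PosDef) (hB : B.PosDef) (hS : S.PosDef)
    (hM : ((hA.posSemidef.sqrt)⁻¹ * B * (hA.posSemidef.sqrt)⁻¹).IsHermitian) :
    ConvexOn ℝ (Set.Icc 0 1)
      (fun t : ℝ =>
        Real.log (((hA.posSemidef.sqrt * matRPow hM t * hA.posSemidef.sqrt)⁻¹ * S).trace)) :=
  log_trace_inv_geodesic_convex_general p A B S hA hB hS hM
end

section
/- Let E be a Euclidean gradient G·X·G-type transformation: given a symmetric matrix X (Euclidean gradient at SPD matrix G), α > 0 and β with α + pβ > 0, the Riemannian gradient Y = (1/α)·G·X·G - (β/(α(α+pβ)))·tr(X·G)·G satisfies, for all symmetric tangent vectors ξ, the compatibility identity α·tr(G⁻¹YG⁻¹ξ) + β·tr(G⁻¹Y)·tr(G⁻¹ξ) = tr(X·ξ). -/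
/-!
With `Y` the gradient and `s = α + pβ`, one has `G⁻¹YG⁻¹ = X/α - (β tr(XG)/(α s)) G⁻¹` and
`tr(G⁻¹Y) = tr(XG)/s`. Pairing with `ξ`, the `α`-term gives `tr(Xξ) - (β tr(XG)/s) tr(G⁻¹ξ)`
and the `β`-term gives exactly `(β tr(XG)/s) tr(G⁻¹ξ)`, which cancels the correction.
-/

open Matrix

namespace Matrix

variable {n K : Type*} [Fintype n] [DecidableEq n] [Field K]

noncomputable def fisherInner (α β : K) (G Y ξ : Matrix n n K) : K :=
  α * (G⁻¹ * Y * G⁻¹ * ξ).trace + β * (G⁻¹ * Y).trace * (G⁻¹ * ξ).trace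

noncomputable def fisherGradient (α β : K) (G X : Matrix n n K) : Matrix n n K :=
  (1 / α) • (G * X * G) - (β / (α * (α + Fintype.card n * β))) • (X * G).trace • G

variable {α β : K} {G : Matrix n n K}

theorem inv_mul_fisherGradient_mul_inv (hG : IsUnit G.det) (X : Matrix n n K) :
    G⁻¹ * fisherGradient α β G X * G⁻¹ =
      (1 / α) • X - (β / (α * (α + Fintype.card n * β)) * (X * G).trace) • G⁻¹ := by
  simp only [fisherGradient, Matrix.mul_sub, Matrix.sub_mul, Matrix.mul_smul, Matrix.smul_mul,
    smul_smul, Matrix.mul_assoc, mul_nonsing_inv _ hG, nonsing_inv_mul_cancel_left _ _ hG,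
    Matrix.mul_one]

theorem trace_inv_mul_fisherGradient (hG : IsUnit G.det) (hα : α ≠ 0)
    (hαβ : α + Fintype.card n * β ≠ 0) (X : Matrix n n K) :
    (G⁻¹ * fisherGradient α β G X).trace = (X * G).trace / (α + Fintype.card n * β) := by
  simp only [fisherGradient, Matrix.mul_sub, Matrix.mul_smul, trace_sub, trace_smul,
    smul_eq_mul, ← Matrix.mul_assoc, nonsing_inv_mul _ hG, Matrix.one_mul, trace_one]
  rw [div_mul_eq_mul_div, div_mul_eq_mul_div, one_mul, div_sub_div _ _ hα (mul_ne_zero hα hαβ),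
    div_eq_div_iff (mul_ne_zero hα (mul_ne_zero hα hαβ)) hαβ]
  ring

theorem fisherInner_fisherGradient (hG : IsUnit G.det) (hα : α ≠ 0)
    (hαβ : α + Fintype.card n * β ≠ 0) (X ξ : Matrix n n K) :
    fisherInner α β G (fisherGradient α β G X) ξ = (X * ξ).trace := by
  rw [fisherInner, inv_mul_fisherGradient_mul_inv hG, trace_inv_mul_fisherGradient hG hα hαβ]
  simp only [Matrix.sub_mul, Matrix.smul_mul, trace_sub, trace_smul, smul_eq_mul]
  field_simp
  ring

end Matrix

theorem riemannian_gradient_identity_general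
    (p : ℕ)
    (G X : Matrix (Fin p) (Fin p) ℝ) (hG : G.PosDef)
    (α β : ℝ) (hα : 0 < α) (hαβ : 0 < α + p * β) :
    ∀ ξ : Matrix (Fin p) (Fin p) ℝ, ξ.IsSymm →
      α * (G⁻¹ * ((1 / α) • (G * X * G) - (β / (α * (α + p * β))) • (X * G).trace • G)
            * G⁻¹ * ξ).trace +
        β * (G⁻¹ * ((1 / α) • (G * X * G) - (β / (α * (α + p * β))) • (X * G).trace • G)).trace *
          (G⁻¹ * ξ).trace = (X * ξ).trace := by
  intro ξ _
  have hdet : IsUnit G.det := isUnit_iff_ne_zero.mpr hG.det_pos.ne'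
  have hcard : α + (Fintype.card (Fin p) : ℝ) * β ≠ 0 := by
    rw [Fintype.card_fin]; exact hαβ.ne'
  simpa only [fisherInner, fisherGradient, Fintype.card_fin] using
    fisherInner_fisherGradient hdet hα.ne' hcard X ξ

/-- The Riemannian gradient for the Fisher-type metric: with
Y = (1/α)·G·X·G - (β/(α(α+pβ)))·tr(XG)·G, one has
α·tr(G⁻¹YG⁻¹ξ) + β·tr(G⁻¹Y)·tr(G⁻¹ξ) = tr(Xξ) for all symmetric ξ. -/
theorem riemannian_gradient_identity
    (p : ℕ) (hp : 0 < p)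
    (G X : Matrix (Fin p) (Fin p) ℝ) (hG : G.PosDef) (hX : X.IsSymm)
    (α β : ℝ) (hα : 0 < α) (hαβ : 0 < α + p * β) :
    ∀ ξ : Matrix (Fin p) (Fin p) ℝ, ξ.IsSymm →
      α * (G⁻¹ * ((1 / α) • (G * X * G) - (β / (α * (α + p * β))) • (X * G).trace • G)
            * G⁻¹ * ξ).trace +
        β * (G⁻¹ * ((1 / α) • (G * X * G) - (β / (α * (α + p * β))) • (X * G).trace • G)).trace *
          (G⁻¹ * ξ).trace = (X * ξ).trace :=
  riemannian_gradient_identity_general p G X hG α β hα hαβ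
end
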